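/- arXiv:1408.5559 — 2 statements merged into one kernel-verified Lean document; each statement's English description precedes it below -/
import Mathlib

section
/- For any solution x of the EigenAnt dynamics with positive initial conditions, the function 1/S is locally integrable on [0,∞) and ∫₀^t ds/S(s) → +∞ as t → +∞, where S(t) := Σ_{j=1}^n x_j(t). -/
/-!
The total mass `S` never vanishes and starts positive, so it stays positive. Each `xᵢ` solves
the linear equation `xᵢ' = cᵢ xᵢ` with continuous rate `cᵢ = -α + β dᵢ / S`, so
`xᵢ(t) = xᵢ(0) exp ∫₀ᵗ cᵢ > 0`. Summing the equations gives
`S' = -α S + (∑ β dᵢ xᵢ) / S ≤ -α S + B` for any `B ≥ max β dᵢ`, and Grönwall bounds `S` by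
`M = max (S 0) (B / α)`. Hence `1 / S ≥ 1 / M` and `∫₀ᵗ 1 / S ≥ t / M`.
-/

open Filter MeasureTheory Set Real

theorem IsPreconnected.pos_of_forall_ne_zero {X : Type*} [TopologicalSpace X] {s : Set X}
    {f : X → ℝ} (hs : IsPreconnected s) (hf : ContinuousOn f s) (hne : ∀ x ∈ s, f x ≠ 0)
    {a x : X} (ha : a ∈ s) (hfa : 0 < f a) (hx : x ∈ s) : 0 < f x := by
  by_contra! hfx
  obtain ⟨y, hy, hy0⟩ := hs.intermediate_value hx ha hf ⟨hfx, hfa.le⟩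
  exact hne y hy hy0

theorem eq_mul_exp_integral_of_hasDerivAt {f c : ℝ → ℝ} (hc : Continuous c)
    (hf : ∀ t, 0 ≤ t → HasDerivAt f (c t * f t) t) {t : ℝ} (ht : 0 ≤ t) :
    f t = f 0 * exp (∫ s in (0 : ℝ)..t, c s) := by
  set E : ℝ → ℝ := fun u => ∫ s in (0 : ℝ)..u, c s
  have hE (u : ℝ) : HasDerivAt E (c u) u := (hc.integral_hasStrictDerivAt 0 u).hasDerivAt
  -- integrating factor: `f · exp (-E)` has zero derivative
  have hw (u : ℝ) (hu : 0 ≤ u) : HasDerivAt (fun v => f v * exp (-E v)) 0 u := by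
    have h : HasDerivAt (fun v => f v * exp (-E v))
        (c u * f u * exp (-E u) + f u * (exp (-E u) * -c u)) u := (hf u hu).mul (hE u).neg.exp
    convert h using 1
    ring
  have hconst := constant_of_has_deriv_right_zero (a := 0) (b := t)
    (fun u hu => (hw u hu.1).continuousAt.continuousWithinAt)
    (fun u hu => (hw u hu.1).hasDerivWithinAt) t ⟨ht, le_rfl⟩
  calc f t = f t * exp (-E t) * exp (E t) := by
        rw [mul_assoc, ← exp_add, neg_add_cancel, exp_zero, mul_one]
    _ = f 0 * exp (E t) := by rw [hconst]; simp [E]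

theorem pos_of_hasDerivAt_eq_mul {f c : ℝ → ℝ} (hc : ContinuousOn c (Ici 0))
    (hf : ∀ t, 0 ≤ t → HasDerivAt f (c t * f t) t) (h0 : 0 < f 0) {t : ℝ} (ht : 0 ≤ t) :
    0 < f t := by
  have hc' : Continuous fun s => c (max s 0) :=
    hc.comp_continuous (continuous_id.max continuous_const) fun s => le_max_right s 0
  have hf' (s : ℝ) (hs : 0 ≤ s) : HasDerivAt f (c (max s 0) * f s) s := by
    simpa [max_eq_left hs] using hf s hs
  rw [eq_mul_exp_integral_of_hasDerivAt (f := f) hc' hf' ht]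
  positivity

theorem le_max_of_hasDerivAt_le_neg_mul_add {f f' : ℝ → ℝ} {α B : ℝ} (hα : 0 < α)
    (hf : ∀ t, 0 ≤ t → HasDerivAt f (f' t) t) (bound : ∀ t, 0 ≤ t → f' t ≤ -α * f t + B)
    {t : ℝ} (ht : 0 ≤ t) : f t ≤ max (f 0) (B / α) := by
  have hgronwall := le_gronwallBound_of_liminf_deriv_right_le (f := f) (b := t)
    (fun u hu => (hf u hu.1).continuousAt.continuousWithinAt)
    (fun u hu r hr => by simpa [slope_def_field, div_eq_inv_mul] using
      (hf u hu.1).hasDerivWithinAt.liminf_right_slope_le hr)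
    le_rfl (fun u hu => bound u hu.1) t ⟨ht, le_rfl⟩
  rw [gronwallBound_of_K_ne_0 (neg_ne_zero.2 hα.ne'), sub_zero] at hgronwall
  set e := exp (-α * t)
  have he1 : e ≤ 1 := exp_le_one_iff.2 (by nlinarith)
  have h1e : 0 ≤ 1 - e := sub_nonneg.2 he1
  calc f t ≤ e * f 0 + (1 - e) * (B / α) := by
        convert hgronwall using 1; rw [div_neg]; ring
    _ ≤ e * max (f 0) (B / α) + (1 - e) * max (f 0) (B / α) := by
        gcongr
        · exact le_max_left _ _
        · exact le_max_right _ _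
    _ = max (f 0) (B / α) := by ring

theorem tendsto_intervalIntegral_atTop_of_le {f : ℝ → ℝ} {m : ℝ} (hm : 0 < m)
    (hf : LocallyIntegrableOn f (Ici 0)) (hle : ∀ t, 0 ≤ t → m ≤ f t) :
    Tendsto (fun t => ∫ s in (0 : ℝ)..t, f s) atTop atTop := by
  have hlin (t : ℝ) (ht : 0 ≤ t) : t * m ≤ ∫ s in (0 : ℝ)..t, f s := by
    have hint : IntervalIntegrable f volume 0 t :=
      (intervalIntegrable_iff_integrableOn_Icc_of_le ht).2
        (hf.integrableOn_compact_subset Icc_subset_Ici_self isCompact_Icc)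
    calc t * m = ∫ _ in (0 : ℝ)..t, m := by simp [mul_comm]
      _ ≤ ∫ s in (0 : ℝ)..t, f s :=
        intervalIntegral.integral_mono_on ht intervalIntegrable_const hint fun s hs => hle s hs.1
  exact tendsto_atTop_mono' atTop ((eventually_ge_atTop 0).mono hlin)
    (tendsto_id.atTop_mul_const hm)

theorem sum_neg_add_div_mul_le {ι : Type*} (s : Finset ι) {α B : ℝ} {a y : ι → ℝ}
    (hy : ∀ i ∈ s, 0 ≤ y i) (ha : ∀ i ∈ s, a i ≤ B) (hpos : 0 < ∑ i ∈ s, y i) :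
    ∑ i ∈ s, (-α + a i / ∑ j ∈ s, y j) * y i ≤ -α * ∑ i ∈ s, y i + B := by
  set T := ∑ j ∈ s, y j
  calc ∑ i ∈ s, (-α + a i / T) * y i ≤ ∑ i ∈ s, (-α + B / T) * y i := by
        gcongr with i hi
        · exact hy i hi
        · exact ha i hi
    _ = (-α + B / T) * T := (Finset.mul_sum ..).symm
    _ = -α * T + B := by field_simp

theorem stmt5_general
    (n : ℕ) (α β : ℝ) (hα : 0 < α)
    (d : Fin n → ℝ)
    (x : ℝ → Fin n → ℝ)
    (hS : ∀ t : ℝ, 0 ≤ t → (∑ j, x t j) ≠ 0)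
    (hode : ∀ (i : Fin n) (t : ℝ), 0 ≤ t →
      HasDerivAt (fun s => x s i) ((-α + β * d i / (∑ j, x t j)) * x t i) t)
    (hx0 : ∀ i, 0 < x 0 i)
    :
    MeasureTheory.LocallyIntegrableOn (fun s => (∑ j, x s j)⁻¹) (Set.Ici (0:ℝ)) ∧
    Tendsto (fun t : ℝ => ∫ s in (0:ℝ)..t, (∑ j, x s j)⁻¹) atTop atTop := by
  set S : ℝ → ℝ := fun t => ∑ j, x t j
  have hSderiv (t : ℝ) (ht : 0 ≤ t) : HasDerivAt S (∑ i, (-α + β * d i / S t) * x t i) t :=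
    HasDerivAt.fun_sum fun i _ => hode i t ht
  have hScont : ContinuousOn S (Ici 0) := fun t ht =>
    (hSderiv t ht).continuousAt.continuousWithinAt
  have hS0 : 0 < S 0 := (Finset.sum_nonneg fun i _ => (hx0 i).le).lt_of_ne (hS 0 le_rfl).symm
  have hSpos (t : ℝ) (ht : 0 ≤ t) : 0 < S t :=
    isPreconnected_Ici.pos_of_forall_ne_zero hScont hS self_mem_Ici hS0 ht
  have hxpos (t : ℝ) (ht : 0 ≤ t) (i : Fin n) : 0 < x t i :=
    pos_of_hasDerivAt_eq_mul (c := fun s => -α + β * d i / S s)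
      (continuousOn_const.add (continuousOn_const.div hScont hS)) (hode i)
      (hx0 i) ht
  obtain ⟨B, hB⟩ := Finite.exists_le fun i => β * d i
  have hSbound (t : ℝ) (ht : 0 ≤ t) : S t ≤ max (S 0) (B / α) :=
    le_max_of_hasDerivAt_le_neg_mul_add hα hSderiv (fun u hu => sum_neg_add_div_mul_le _
      (fun i _ => (hxpos u hu i).le) (fun i _ => hB i) (hSpos u hu)) ht
  have hloc : LocallyIntegrableOn (fun s => (S s)⁻¹) (Ici 0) :=
    (hScont.inv₀ hS).locallyIntegrableOn measurableSet_Ici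
  exact ⟨hloc, tendsto_intervalIntegral_atTop_of_le (inv_pos.2 (hS0.trans_le (le_max_left _ _)))
    hloc fun t ht => inv_anti₀ (hSpos t ht) (hSbound t ht)⟩

theorem stmt5
    (n : ℕ) (hn : 0 < n) (α β : ℝ) (hα : 0 < α) (hβ : 0 < β)
    (d : Fin n → ℝ) (hd : ∀ i j : Fin n, i ≤ j → d j ≤ d i) (hdpos : ∀ i, 0 < d i)
    (x : ℝ → Fin n → ℝ)
    (hS : ∀ t : ℝ, 0 ≤ t → (∑ j, x t j) ≠ 0)
    (hode : ∀ (i : Fin n) (t : ℝ), 0 ≤ t →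
      HasDerivAt (fun s => x s i) ((-α + β * d i / (∑ j, x t j)) * x t i) t)
    (hx0 : ∀ i, 0 < x 0 i)
    :
    MeasureTheory.LocallyIntegrableOn (fun s => (∑ j, x s j)⁻¹) (Set.Ici (0:ℝ)) ∧
    Tendsto (fun t : ℝ => ∫ s in (0:ℝ)..t, (∑ j, x s j)⁻¹) atTop atTop :=
  stmt5_general n α β hα d x hS hode hx0
end

section
/- Let x be a solution of the EigenAnt dynamics with positive initial conditions, and let i be an index with d_i < d_1. Define σ_1 := (1/(β d_1)) Σ_{j : d_j = d_1} x_j(0). Then x_i(t) decays exponentially with rate α(1 − d_i/d_1) and explicit prefactor: x_i(t) · e^{α(1 − d_i/d_1) t} → x_i(0) · (α σ_1)^{−d_i/d_1} as t → +∞. -/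
open Filter Set Real Topology

/-!
With `S = ∑ⱼ xⱼ` and `u` an antiderivative of `1 / S`, each coordinate solves a scalar linear
equation, so `xⱼ(t) = xⱼ(0) exp (β dⱼ u(t) - α t)`. Writing `w(t) = exp (β d₁ u(t) - α t)` and
`γⱼ = dⱼ / d₁`, this reads `xⱼ(t) = xⱼ(0) e^{-α (1 - γⱼ) t} w(t)^{γⱼ}`. On the other hand
`H = ∑ⱼ xⱼ / (β dⱼ)` obeys `H' = 1 - α H`, so `H → 1/α`. Since `H = σ₁ w + (nonnegative terms)`,
`w` stays bounded; then every term with `γⱼ < 1` tends to `0`, hence `σ₁ w → 1/α`, and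
`xᵢ(t) e^{α (1 - γᵢ) t} = xᵢ(0) w(t)^{γᵢ} → xᵢ(0) (α σ₁)^{-γᵢ}`.
-/

lemma pos_of_continuousOn_Ici_of_ne_zero {f : ℝ → ℝ} (hf : ContinuousOn f (Ici 0))
    (h0 : 0 < f 0) (hne : ∀ t, 0 ≤ t → f t ≠ 0) {t : ℝ} (ht : 0 ≤ t) : 0 < f t := by
  by_contra! hle
  obtain ⟨s, hs, hs0⟩ := intermediate_value_Icc' ht (hf.mono Icc_subset_Ici_self) ⟨hle, h0.le⟩
  exact hne s hs.1 hs0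

lemma exists_hasDerivAt_of_continuousOn_Ici {g : ℝ → ℝ} (hg : ContinuousOn g (Ici 0)) :
    ∃ u : ℝ → ℝ, u 0 = 0 ∧ ∀ t, 0 ≤ t → HasDerivAt u (g t) t := by
  have hcont : Continuous fun s => g (max s 0) :=
    hg.comp_continuous (continuous_id.max continuous_const) fun s => le_max_right s 0
  refine ⟨fun t => ∫ s in (0 : ℝ)..t, g (max s 0), intervalIntegral.integral_same, fun t ht => ?_⟩
  simpa [max_eq_left ht] using (hcont.integral_hasStrictDerivAt 0 t).hasDerivAt

lemma eq_mul_exp_sub_of_hasDerivAt {f U a : ℝ → ℝ}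
    (hU : ∀ t, 0 ≤ t → HasDerivAt U (a t) t) (hf : ∀ t, 0 ≤ t → HasDerivAt f (a t * f t) t)
    {t : ℝ} (ht : 0 ≤ t) : f t = f 0 * exp (U t - U 0) := by
  have hg : ∀ s, 0 ≤ s → HasDerivAt (fun r => f r * exp (-U r)) 0 s := fun s hs => by
    refine ((hf s hs).mul (hU s hs).neg.exp).congr_deriv ?_
    ring
  have hconst := constant_of_has_deriv_right_zero
    (fun s hs => (hg s hs.1).continuousAt.continuousWithinAt)
    (fun s hs => (hg s hs.1).hasDerivWithinAt) t ⟨ht, le_rfl⟩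
  calc f t = f t * exp (-U t) * exp (U t) := by rw [mul_assoc, ← exp_add]; simp
    _ = f 0 * exp (U t - U 0) := by rw [hconst, mul_assoc, ← exp_add, neg_add_eq_sub]

lemma exp_sub_eq_exp_mul_rpow (α β b D u t : ℝ) (hD : D ≠ 0) :
    exp (β * b * u - α * t) = exp (-(α * (1 - b / D) * t)) * exp (β * D * u - α * t) ^ (b / D) := by
  rw [← exp_mul, ← exp_add]
  congr 1
  field_simp
  ring

lemma tendsto_exp_neg_mul_rpow_of_eventually_le {r γ M : ℝ} {w : ℝ → ℝ} (hr : 0 < r)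
    (hγ : 0 ≤ γ) (hw : ∀ t, 0 ≤ w t) (hM : ∀ᶠ t in atTop, w t ≤ M) :
    Tendsto (fun t => exp (-(r * t)) * w t ^ γ) atTop (𝓝 0) := by
  have hexp : Tendsto (fun t => exp (-(r * t)) * M ^ γ) atTop (𝓝 0) := by
    simpa using (tendsto_exp_neg_atTop_nhds_zero.comp
      (tendsto_id.const_mul_atTop hr)).mul_const (M ^ γ)
  refine tendsto_of_tendsto_of_tendsto_of_le_of_le' tendsto_const_nhds hexp
    (Eventually.of_forall fun t => by have := hw t; positivity) ?_
  filter_upwards [hM] with t ht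
  gcongr
  exact hw t

section EigenAnt

variable {ι : Type*} [Fintype ι] {α β : ℝ} {d : ι → ℝ} {x : ℝ → ι → ℝ}

lemma eigenAnt_exists_eq_mul_exp [Nonempty ι] (hS : ∀ t, 0 ≤ t → ∑ j, x t j ≠ 0)
    (hode : ∀ j t, 0 ≤ t →
      HasDerivAt (fun s => x s j) ((-α + β * d j / ∑ k, x t k) * x t j) t)
    (hx0 : ∀ j, 0 < x 0 j) :
    ∃ u : ℝ → ℝ, ∀ j t, 0 ≤ t → x t j = x 0 j * exp (β * d j * u t - α * t) := by
  have hScont : ContinuousOn (fun t => ∑ j, x t j) (Ici 0) := fun t ht =>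
    (HasDerivAt.fun_sum fun j _ => hode j t ht).continuousAt.continuousWithinAt
  have hSpos : ∀ t, 0 ≤ t → 0 < ∑ j, x t j := fun t ht =>
    pos_of_continuousOn_Ici_of_ne_zero hScont
      (Finset.sum_pos (fun j _ => hx0 j) Finset.univ_nonempty) hS ht
  obtain ⟨u, hu0, hu⟩ :=
    exists_hasDerivAt_of_continuousOn_Ici (g := fun t => (∑ j, x t j)⁻¹)
      (hScont.inv₀ fun t ht => (hSpos t ht).ne')
  refine ⟨u, fun j t ht => ?_⟩
  have hU : ∀ s, 0 ≤ s → HasDerivAt (fun r => β * d j * u r - α * r)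
      (-α + β * d j / ∑ k, x s k) s := fun s hs => by
    refine (((hu s hs).const_mul (β * d j)).sub ((hasDerivAt_id s).const_mul α)).congr_deriv ?_
    ring
  simpa [hu0] using eq_mul_exp_sub_of_hasDerivAt hU (hode j) ht

/-- `H = ∑ⱼ xⱼ / (β dⱼ)` solves `H' = 1 - α H`. -/
lemma eigenAnt_weightedSum_eq (hα : α ≠ 0) (hβd : ∀ j, β * d j ≠ 0)
    (hS : ∀ t, 0 ≤ t → ∑ j, x t j ≠ 0)
    (hode : ∀ j t, 0 ≤ t →
      HasDerivAt (fun s => x s j) ((-α + β * d j / ∑ k, x t k) * x t j) t)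
    {t : ℝ} (ht : 0 ≤ t) :
    ∑ j, x t j / (β * d j) = 1 / α + (∑ j, x 0 j / (β * d j) - 1 / α) * exp (-(α * t)) := by
  have hH : ∀ s, 0 ≤ s → HasDerivAt (fun r => ∑ j, x r j / (β * d j) - 1 / α)
      (-α * (∑ j, x s j / (β * d j) - 1 / α)) s := fun s hs => by
    have hterm : ∀ j, (-α + β * d j / ∑ k, x s k) * x s j / (β * d j)
        = -α * (x s j / (β * d j)) + x s j / ∑ k, x s k := fun j => by
      obtain ⟨hβ, hdj⟩ := mul_ne_zero_iff.mp (hβd j)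
      field_simp [hS s hs]
    refine ((HasDerivAt.fun_sum fun j _ => (hode j s hs).div_const (β * d j)).sub_const
      (1 / α)).congr_deriv ?_
    rw [Finset.sum_congr rfl fun j _ => hterm j, Finset.sum_add_distrib, ← Finset.mul_sum,
      ← Finset.sum_div, div_self (hS s hs), mul_sub, neg_mul, neg_mul, mul_one_div_cancel hα]
    ring
  have hU : ∀ s, 0 ≤ s → HasDerivAt (fun r => -α * r) (-α) s := fun s _ => by
    simpa using (hasDerivAt_id s).const_mul (-α)
  have := eq_mul_exp_sub_of_hasDerivAt hU hH ht
  simp only [mul_zero, sub_zero, neg_mul] at this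
  linarith

lemma eigenAnt_tendsto_weightedSum (hα : 0 < α) (hβd : ∀ j, β * d j ≠ 0)
    (hS : ∀ t, 0 ≤ t → ∑ j, x t j ≠ 0)
    (hode : ∀ j t, 0 ≤ t →
      HasDerivAt (fun s => x s j) ((-α + β * d j / ∑ k, x t k) * x t j) t) :
    Tendsto (fun t => ∑ j, x t j / (β * d j)) atTop (𝓝 (1 / α)) := by
  have hlim : Tendsto (fun t => 1 / α + (∑ j, x 0 j / (β * d j) - 1 / α) * exp (-(α * t)))
      atTop (𝓝 (1 / α)) := by
    simpa using ((tendsto_exp_neg_atTop_nhds_zero.comp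
      (tendsto_id.const_mul_atTop hα)).const_mul _).const_add (1 / α)
  refine hlim.congr' ?_
  filter_upwards [eventually_ge_atTop 0] with t ht
  exact (eigenAnt_weightedSum_eq hα.ne' hβd hS hode ht).symm

/-- The coordinates with `d j = D` contribute `σ * w` to the weighted sum, which dominates it, so
`w` is bounded and all other coordinates decay. -/
lemma tendsto_mul_of_eq_exp_mul_rpow (hα : 0 < α) (hβ : 0 < β) (hdpos : ∀ j, 0 < d j)
    {D : ℝ} (hdD : ∀ j, d j ≤ D) {j₀ : ι} (hj₀ : d j₀ = D) (hx0 : ∀ j, 0 < x 0 j)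
    {w : ℝ → ℝ} (hw : ∀ t, 0 < w t)
    (hx : ∀ j t, 0 ≤ t → x t j = x 0 j * (exp (-(α * (1 - d j / D) * t)) * w t ^ (d j / D)))
    {L : ℝ} (hH : Tendsto (fun t => ∑ j, x t j / (β * d j)) atTop (𝓝 L)) :
    Tendsto (fun t => 1 / (β * D) * (∑ j ∈ Finset.univ.filter (fun j => d j = D), x 0 j) * w t)
      atTop (𝓝 L) := by
  have hD : 0 < D := hj₀ ▸ hdpos j₀
  set σ := 1 / (β * D) * ∑ j ∈ Finset.univ.filter (fun j => d j = D), x 0 j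
  set R := fun t => ∑ j ∈ Finset.univ.filter (fun j => d j ≠ D), x t j / (β * d j)
  have hσ : 0 < σ := mul_pos (by positivity)
    (Finset.sum_pos (fun j _ => hx0 j) ⟨j₀, Finset.mem_filter.2 ⟨Finset.mem_univ _, hj₀⟩⟩)
  have hsplit : ∀ t, 0 ≤ t → ∑ j, x t j / (β * d j) = σ * w t + R t := fun t ht => by
    rw [← Finset.sum_filter_add_sum_filter_not Finset.univ (fun j => d j = D)]
    congr 1
    simp only [σ, Finset.mul_sum, Finset.sum_mul]
    refine Finset.sum_congr rfl fun j hj => ?_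
    rw [hx j t ht, (Finset.mem_filter.1 hj).2, div_self hD.ne', rpow_one]
    simp only [sub_self, mul_zero, zero_mul, neg_zero, exp_zero, one_mul]
    ring
  have hRnn : ∀ t, 0 ≤ t → 0 ≤ R t := fun t ht => Finset.sum_nonneg fun j _ => by
    rw [hx j t ht]
    have := hx0 j
    have := hw t
    have := hdpos j
    positivity
  have hbound : ∀ᶠ t in atTop, w t ≤ (L + 1) / σ := by
    filter_upwards [hH.eventually (gt_mem_nhds (lt_add_one L)), eventually_ge_atTop 0]
      with t hHt ht
    rw [le_div_iff₀ hσ]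
    linarith [hsplit t ht, hRnn t ht]
  have hR : Tendsto R atTop (𝓝 0) := by
    rw [← Finset.sum_const_zero]
    refine tendsto_finsetSum _ fun j hj => ?_
    have hγ : d j / D < 1 :=
      (div_lt_one hD).2 ((hdD j).lt_of_ne (Finset.mem_filter.1 hj).2)
    have hdecay := (tendsto_exp_neg_mul_rpow_of_eventually_le (mul_pos hα (sub_pos.2 hγ))
      (div_nonneg (hdpos j).le hD.le) (fun t => (hw t).le) hbound).const_mul (x 0 j / (β * d j))
    rw [mul_zero] at hdecay
    refine hdecay.congr' ?_
    filter_upwards [eventually_ge_atTop 0] with t ht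
    rw [hx j t ht]
    ring
  have hlim := hH.sub hR
  rw [sub_zero] at hlim
  refine hlim.congr' ?_
  filter_upwards [eventually_ge_atTop 0] with t ht
  rw [hsplit t ht]
  ring

end EigenAnt

theorem stmt16_general
    (n : ℕ) (hn : 0 < n) (α β : ℝ) (hα : 0 < α) (hβ : 0 < β)
    (d : Fin n → ℝ) (hd : ∀ i j : Fin n, i ≤ j → d j ≤ d i) (hdpos : ∀ i, 0 < d i)
    (x : ℝ → Fin n → ℝ)
    (hS : ∀ t : ℝ, 0 ≤ t → (∑ j, x t j) ≠ 0)
    (hode : ∀ (i : Fin n) (t : ℝ), 0 ≤ t →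
      HasDerivAt (fun s => x s i) ((-α + β * d i / (∑ j, x t j)) * x t i) t)
    (hx0 : ∀ i, 0 < x 0 i)
    (i : Fin n)
    (σ1 : ℝ)
    (hσ1 : σ1 = (1 / (β * d ⟨0, hn⟩)) * ∑ j ∈ Finset.univ.filter (fun j => d j = d ⟨0, hn⟩), x 0 j) :
    Tendsto (fun t => x t i * Real.exp (α * (1 - d i / d ⟨0, hn⟩) * t)) atTop
      (nhds (x 0 i * (α * σ1) ^ (-(d i / d ⟨0, hn⟩)))) := by
  have : Nonempty (Fin n) := ⟨⟨0, hn⟩⟩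
  set d₁ := d ⟨0, hn⟩
  have hd₁ : 0 < d₁ := hdpos _
  obtain ⟨u, hu⟩ := eigenAnt_exists_eq_mul_exp hS hode hx0
  set w := fun t => exp (β * d₁ * u t - α * t)
  have hx : ∀ j t, 0 ≤ t →
      x t j = x 0 j * (exp (-(α * (1 - d j / d₁) * t)) * w t ^ (d j / d₁)) := fun j t ht => by
    rw [hu j t ht, exp_sub_eq_exp_mul_rpow α β (d j) d₁ (u t) t hd₁.ne']
  have hd₁_ge : ∀ j, d j ≤ d₁ := fun j => hd _ j (Fin.le_iff_val_le_val.2 (Nat.zero_le _))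
  have hσw := tendsto_mul_of_eq_exp_mul_rpow hα hβ hdpos hd₁_ge rfl hx0 (fun t => exp_pos _) hx
    (eigenAnt_tendsto_weightedSum hα (fun j => (mul_pos hβ (hdpos j)).ne') hS hode)
  rw [← hσ1] at hσw
  have hσ : 0 < σ1 := hσ1 ▸ mul_pos (by positivity)
    (Finset.sum_pos (fun j _ => hx0 j) ⟨⟨0, hn⟩, by simp [d₁]⟩)
  have hw : Tendsto w atTop (𝓝 (α * σ1)⁻¹) := by
    have h := hσw.const_mul σ1⁻¹
    simp only [← mul_assoc, inv_mul_cancel₀ hσ.ne', one_mul] at h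
    convert h using 2
    field_simp
  have hγ : 0 ≤ d i / d₁ := div_nonneg (hdpos i).le hd₁.le
  have hlim := (hw.rpow_const (Or.inr hγ)).const_mul (x 0 i)
  rw [inv_rpow (mul_pos hα hσ).le, ← rpow_neg (mul_pos hα hσ).le] at hlim
  refine hlim.congr' ?_
  filter_upwards [eventually_ge_atTop 0] with t ht
  rw [hx i t ht, mul_comm (exp _), mul_assoc, mul_assoc, ← exp_add]
  simp

theorem stmt16
    (n : ℕ) (hn : 0 < n) (α β : ℝ) (hα : 0 < α) (hβ : 0 < β)
    (d : Fin n → ℝ) (hd : ∀ i j : Fin n, i ≤ j → d j ≤ d i) (hdpos : ∀ i, 0 < d i)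
    (x : ℝ → Fin n → ℝ)
    (hS : ∀ t : ℝ, 0 ≤ t → (∑ j, x t j) ≠ 0)
    (hode : ∀ (i : Fin n) (t : ℝ), 0 ≤ t →
      HasDerivAt (fun s => x s i) ((-α + β * d i / (∑ j, x t j)) * x t i) t)
    (hx0 : ∀ i, 0 < x 0 i)
    (i : Fin n) (hi : d i < d ⟨0, hn⟩)
    (σ1 : ℝ)
    (hσ1 : σ1 = (1 / (β * d ⟨0, hn⟩)) * ∑ j ∈ Finset.univ.filter (fun j => d j = d ⟨0, hn⟩), x 0 j) :
    Tendsto (fun t => x t i * Real.exp (α * (1 - d i / d ⟨0, hn⟩) * t)) atTop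
      (nhds (x 0 i * (α * σ1) ^ (-(d i / d ⟨0, hn⟩)))) :=
  stmt16_general n hn α β hα hβ d hd hdpos x hS hode hx0 i σ1 hσ1
end
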